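/- Let n ≥ 3 and suppose a_n ≥ 3. Then q_{n-2}+q_{n-1}, 2q_{n-1}, q_n − q_{n-1} are three successive elements of 𝔔(α); moreover their associated values satisfy ξ_{n-2} − ξ_{n-1} > 2ξ_{n-1} > ξ_{n-1} + ξ_n. -/

import Mathlib

open Filter Real Set

/-- Iterates of the Gauss map starting from `α`: `x₀ = α`, `x_{n+1} = 1 / fract (xₙ)`. -/
noncomputable def gaussIter (α : ℝ) : ℕ → ℝ
  | 0 => α
  | n + 1 => (Int.fract (gaussIter α n))⁻¹

/-- Partial quotients of the continued fraction `α = [a₀; a₁, a₂, …]`. -/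
noncomputable def cfA (α : ℝ) (n : ℕ) : ℤ := ⌊gaussIter α n⌋

/-- Denominators of convergents, with shifted index: `cfQ α 0 = q₋₁ = 0`,
`cfQ α 1 = q₀ = 1`, and `cfQ α (n+1) = qₙ` where `qₙ = aₙ q_{n-1} + q_{n-2}`. -/
noncomputable def cfQ (α : ℝ) : ℕ → ℤ
  | 0 => 0
  | 1 => 1
  | n + 2 => cfA α (n + 1) * cfQ α (n + 1) + cfQ α n

/-- Numerators of convergents, with shifted index: `cfP α 0 = p₋₁ = 1`,
`cfP α 1 = p₀ = ⌊α⌋`, and `cfP α (n+1) = pₙ` where `pₙ = aₙ p_{n-1} + p_{n-2}`. -/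
noncomputable def cfP (α : ℝ) : ℕ → ℤ
  | 0 => 1
  | 1 => ⌊α⌋
  | n + 2 => cfA α (n + 1) * cfP α (n + 1) + cfP α n

/-- `qₙ`, the denominator of the `n`-th convergent of `α`. -/
noncomputable def cfDen (α : ℝ) (n : ℕ) : ℤ := cfQ α (n + 1)

/-- `pₙ`, the numerator of the `n`-th convergent of `α`. -/
noncomputable def cfNum (α : ℝ) (n : ℕ) : ℤ := cfP α (n + 1)

/-- `ξₙ = |qₙ α − pₙ|`. -/
noncomputable def cfXi (α : ℝ) (n : ℕ) : ℝ := |(cfDen α n : ℝ) * α - (cfNum α n : ℝ)|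

/-- `ψ_α(t) = min { ‖qα‖ : q ∈ ℤ, 1 ≤ q ≤ t }`. -/
noncomputable def psiFn (α t : ℝ) : ℝ :=
  sInf {x : ℝ | ∃ p q : ℤ, 1 ≤ q ∧ (q : ℝ) ≤ t ∧ x = |(q : ℝ) * α - (p : ℝ)|}

/-- `ψ_α^[2](t)`: the same minimum but over pairs `(p,q)` that are not `(pₙ,qₙ)` for any `n ≥ 0`. -/
noncomputable def psi2Fn (α t : ℝ) : ℝ :=
  sInf {x : ℝ | ∃ p q : ℤ, 1 ≤ q ∧ (q : ℝ) ≤ t ∧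
    (∀ n : ℕ, ¬(p = cfNum α n ∧ q = cfDen α n)) ∧ x = |(q : ℝ) * α - (p : ℝ)|}

/-- `ψ_α^[2]*(t)`: the same minimum but over pairs `(p,q)` with `p/q ≠ pₙ/qₙ` for all `n ≥ 0`. -/
noncomputable def psi2sFn (α t : ℝ) : ℝ :=
  sInf {x : ℝ | ∃ p q : ℤ, 1 ≤ q ∧ (q : ℝ) ≤ t ∧
    (∀ n : ℕ, (p : ℝ) / (q : ℝ) ≠ (cfNum α n : ℝ) / (cfDen α n : ℝ)) ∧
    x = |(q : ℝ) * α - (p : ℝ)|}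

/-- `λ(α) = liminf_{t→∞} t · ψ_α(t)`. -/
noncomputable def lamOf (α : ℝ) : ℝ := Filter.liminf (fun t : ℝ => t * psiFn α t) Filter.atTop

/-- `𝔨(α) = liminf_{t→∞} t · ψ_α^[2](t)`. -/
noncomputable def kOf (α : ℝ) : ℝ := Filter.liminf (fun t : ℝ => t * psi2Fn α t) Filter.atTop

/-- `𝔨*(α) = liminf_{t→∞} t · ψ_α^[2]*(t)`. -/
noncomputable def ksOf (α : ℝ) : ℝ := Filter.liminf (fun t : ℝ => t * psi2sFn α t) Filter.atTop

/-- `α` and `β` are equivalent: `β = (aα+b)/(cα+d)` with `a,b,c,d ∈ ℤ`, `|ad − bc| = 1`. -/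
def CFEquiv (α β : ℝ) : Prop :=
  ∃ a b c d : ℤ, |a * d - b * c| = 1 ∧ β = ((a : ℝ) * α + (b : ℝ)) / ((c : ℝ) * α + (d : ℝ))

/-- The spectrum `𝕃₂ = {𝔨(α) : α irrational}`. -/
def L2 : Set ℝ := {x : ℝ | ∃ α : ℝ, Irrational α ∧ kOf α = x}

/-- The spectrum `𝕃₂* = {𝔨*(α) : α irrational}`. -/
def L2s : Set ℝ := {x : ℝ | ∃ α : ℝ, Irrational α ∧ ksOf α = x}

/-- `𝔔(α)`: the set of positive integers at which `ψ_α^[2]` is discontinuous. -/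
def QSet (α : ℝ) : Set ℤ := {m : ℤ | 0 < m ∧ ¬ ContinuousAt (psi2Fn α) (m : ℝ)}

/-- `𝔛(α)`: the set of positive integers at which `ψ_α^[2]*` is discontinuous. -/
def XSet (α : ℝ) : Set ℤ := {m : ℤ | 0 < m ∧ ¬ ContinuousAt (psi2sFn α) (m : ℝ)}

/-- The members of the list `l` are successive elements of `S`: they belong to `S`,
are listed in increasing order, and no element of `S` lies strictly between
consecutive listed ones. -/
def SuccessiveIn (S : Set ℤ) (l : List ℤ) : Prop :=
  (∀ x ∈ l, x ∈ S) ∧ l.Chain' (fun x y => x < y ∧ ∀ z ∈ S, ¬(x < z ∧ z < y))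

/-- `κ¹ₙ = (q_{n-2} + q_{n-1})(ξ_{n-2} − ξ_{n-1})`. -/
noncomputable def kap1 (α : ℝ) (n : ℕ) : ℝ :=
  ((cfDen α (n - 2) + cfDen α (n - 1) : ℤ) : ℝ) * (cfXi α (n - 2) - cfXi α (n - 1))

/-- `κ²ₙ = (qₙ − q_{n-1})(ξ_{n-1} + ξₙ)`. -/
noncomputable def kap2 (α : ℝ) (n : ℕ) : ℝ :=
  ((cfDen α n - cfDen α (n - 1) : ℤ) : ℝ) * (cfXi α (n - 1) + cfXi α n)

/-- `κ³ₙ = (2q_{n-2} + q_{n-1})(2ξ_{n-2} − ξ_{n-1})`. -/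
noncomputable def kap3 (α : ℝ) (n : ℕ) : ℝ :=
  ((2 * cfDen α (n - 2) + cfDen α (n - 1) : ℤ) : ℝ) * (2 * cfXi α (n - 2) - cfXi α (n - 1))

/-- `κ⁴ₙ = 4 q_{n-1} ξ_{n-1}`. -/
noncomputable def kap4 (α : ℝ) (n : ℕ) : ℝ :=
  ((4 * cfDen α (n - 1) : ℤ) : ℝ) * cfXi α (n - 1)

/-!
Write `Q₀ = q_{n-2}`, `Q₁ = q_{n-1}` and `η₀ = ξ_{n-2}`, `η₁ = ξ_{n-1}`,
`η₂ = ξ_n`, so that `q_n = a_n Q₁ + Q₀` and `η₀ = a_n η₁ + η₂`. The pairs `(p_{n-1}, q_{n-1})`,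
`(p_{n-2}, q_{n-2})` form a basis of `ℤ²` and `q_{n-1} α - p_{n-1}`, `q_{n-2} α - p_{n-2}` have
opposite signs, so `(p, q) = s (p_{n-1}, q_{n-1}) + t (p_{n-2}, q_{n-2})` has
`|q α - p| = |s η₁ - t η₀|`. A case analysis on the signs of `s` and `t` shows that, apart from the
convergent `(s, t) = (1, 0)`, this is at least `η₀` when `q < Q₀ + Q₁`, at least `η₀ - η₁` when
`q < 2 Q₁` and at least `2 η₁` when `q < q_n - Q₁`; the pairs `(1, 1)`, `(2, 0)`, `(a_n - 1, 1)`
attain `η₀ - η₁`, `2 η₁`, `η₁ + η₂` at exactly these denominators. Hence `ψ_α^[2]` drops at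
`Q₀ + Q₁`, `2 Q₁`, `q_n - Q₁` and is constant in between.
-/

section Convergents

variable {α : ℝ}

theorem irrational_gaussIter (hα : Irrational α) : ∀ k, Irrational (gaussIter α k)
  | 0 => hα
  | k + 1 => ((irrational_gaussIter hα k).sub_intCast ⌊gaussIter α k⌋).inv

theorem fract_gaussIter_pos (hα : Irrational α) (k : ℕ) : 0 < Int.fract (gaussIter α k) :=
  Int.fract_pos.mpr ((irrational_gaussIter hα k).ne_int _)

theorem one_le_cfA (hα : Irrational α) (k : ℕ) : 1 ≤ cfA α (k + 1) := by
  refine Int.le_floor.mpr ?_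
  rw [Int.cast_one, gaussIter, one_le_inv₀ (fract_gaussIter_pos hα k)]
  exact (Int.fract_lt_one _).le

theorem cfQ_nonneg (hα : Irrational α) : ∀ k, 0 ≤ cfQ α k
  | 0 => le_rfl
  | 1 => zero_le_one
  | k + 2 => add_nonneg (mul_nonneg (zero_le_one.trans (one_le_cfA hα k))
      (cfQ_nonneg hα (k + 1))) (cfQ_nonneg hα k)

theorem cfQ_le_succ (hα : Irrational α) (k : ℕ) : cfQ α (k + 1) ≤ cfQ α (k + 2) := by
  have := one_le_cfA hα k
  have := cfQ_nonneg hα (k + 1)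
  have := cfQ_nonneg hα k
  show cfQ α (k + 1) ≤ cfA α (k + 1) * cfQ α (k + 1) + cfQ α k
  nlinarith

theorem cfQ_mono (hα : Irrational α) : Monotone (cfQ α) :=
  monotone_nat_of_le_succ fun
    | 0 => zero_le_one
    | k + 1 => cfQ_le_succ hα k

theorem one_le_cfQ (hα : Irrational α) (k : ℕ) : 1 ≤ cfQ α (k + 1) :=
  cfQ_mono hα (Nat.le_add_left 1 k)

theorem cfQ_lt_succ (hα : Irrational α) (k : ℕ) : cfQ α (k + 2) < cfQ α (k + 3) := by
  have := one_le_cfA hα (k + 1)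
  have := cfQ_nonneg hα (k + 2)
  have := one_le_cfQ hα k
  show cfQ α (k + 2) < cfA α (k + 2) * cfQ α (k + 2) + cfQ α (k + 1)
  nlinarith

theorem cfQ_lt_cfQ (hα : Irrational α) {i j : ℕ} (hij : i < j) (hj : 3 ≤ j) :
    cfQ α i < cfQ α j := by
  obtain ⟨k, rfl⟩ : ∃ k, j = k + 3 := ⟨j - 3, by omega⟩
  exact (cfQ_mono hα (by omega : i ≤ k + 2)).trans_lt (cfQ_lt_succ hα k)

theorem cfP_mul_cfQ_sub (k : ℕ) :
    cfP α (k + 1) * cfQ α k - cfP α k * cfQ α (k + 1) = (-1) ^ (k + 1) := by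
  induction k with
  | zero => simp [cfP, cfQ]
  | succ k ih =>
    show (cfA α (k + 1) * cfP α (k + 1) + cfP α k) * cfQ α (k + 1)
      - cfP α (k + 1) * (cfA α (k + 1) * cfQ α (k + 1) + cfQ α k) = (-1) ^ (k + 2)
    linear_combination (-1 : ℤ) * ih

theorem exists_eq_cfP_cfQ_comb (k : ℕ) (p q : ℤ) : ∃ s t : ℤ,
    p = s * cfP α (k + 1) + t * cfP α k ∧ q = s * cfQ α (k + 1) + t * cfQ α k := by
  set d := cfP α (k + 1) * cfQ α k - cfP α k * cfQ α (k + 1)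
  have hd : d * d = 1 := by
    rw [show d = (-1) ^ (k + 1) from cfP_mul_cfQ_sub k, ← pow_add, Even.neg_one_pow ⟨k + 1, rfl⟩]
  refine ⟨d * (p * cfQ α k - q * cfP α k), d * (q * cfP α (k + 1) - p * cfQ α (k + 1)), ?_, ?_⟩
  · linear_combination (-p) * hd
  · linear_combination (-q) * hd

end Convergents

section Errors

variable {α : ℝ}

/-- `cfErr α (n + 1) = qₙ α - pₙ`, so that `cfXi α n = |cfErr α (n + 1)|`; `cfErr α 0 = -1`. -/
noncomputable def cfErr (α : ℝ) (k : ℕ) : ℝ := cfQ α k * α - cfP α k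

theorem cfErr_add_two (k : ℕ) :
    cfErr α (k + 2) = cfA α (k + 1) * cfErr α (k + 1) + cfErr α k := by
  simp only [cfErr, cfQ, cfP]
  push_cast
  ring

theorem cfErr_succ (hα : Irrational α) (k : ℕ) :
    cfErr α (k + 1) = -(cfErr α k * Int.fract (gaussIter α k)) := by
  induction k with
  | zero =>
    simp only [cfErr, cfQ, cfP, gaussIter, Int.fract]
    push_cast
    ring
  | succ k ih =>
    have hf := (fract_gaussIter_pos hα k).ne'
    have hfract : Int.fract (gaussIter α (k + 1)) =
        (Int.fract (gaussIter α k))⁻¹ - cfA α (k + 1) := rfl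
    have hprev : cfErr α k = -(cfErr α (k + 1) / Int.fract (gaussIter α k)) := by
      rw [ih]
      field_simp
    rw [cfErr_add_two, hfract, hprev]
    field_simp
    ring

theorem cfErr_ne_zero (hα : Irrational α) : ∀ k, cfErr α k ≠ 0
  | 0 => by simp [cfErr, cfQ, cfP]
  | k + 1 => by
    rw [cfErr_succ hα k, neg_ne_zero]
    exact mul_ne_zero (cfErr_ne_zero hα k) (fract_gaussIter_pos hα k).ne'

theorem cfErr_mul_succ_neg (hα : Irrational α) (k : ℕ) : cfErr α k * cfErr α (k + 1) < 0 := by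
  rw [cfErr_succ hα k, mul_neg, ← mul_assoc, neg_lt_zero]
  exact mul_pos (mul_self_pos.mpr (cfErr_ne_zero hα k)) (fract_gaussIter_pos hα k)

theorem abs_cfErr_succ_lt (hα : Irrational α) (k : ℕ) : |cfErr α (k + 1)| < |cfErr α k| := by
  rw [cfErr_succ hα k, abs_neg, abs_mul, abs_of_pos (fract_gaussIter_pos hα k)]
  exact mul_lt_of_lt_one_right (abs_pos.mpr (cfErr_ne_zero hα k)) (Int.fract_lt_one _)

theorem abs_mul_cfErr_add_mul_cfErr (hα : Irrational α) (k : ℕ) (s t : ℝ) :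
    |s * cfErr α (k + 1) + t * cfErr α k| = abs (s * |cfErr α (k + 1)| - t * |cfErr α k|) := by
  have h := cfErr_mul_succ_neg hα k
  rcases (cfErr_ne_zero hα k).lt_or_gt with hk | hk
  · rw [abs_of_neg hk, abs_of_pos (pos_of_mul_neg_right h hk.le), mul_neg, sub_neg_eq_add]
  · rw [abs_of_pos hk, abs_of_neg (neg_of_mul_neg_right h hk.le), ← abs_neg]
    ring_nf

theorem abs_cfErr_eq_cfA_mul_add (hα : Irrational α) (k : ℕ) :
    |cfErr α k| = cfA α (k + 1) * |cfErr α (k + 1)| + |cfErr α (k + 2)| := by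
  have h := abs_mul_cfErr_add_mul_cfErr hα (k + 1) 1 (-cfA α (k + 1))
  have hk : cfErr α k = 1 * cfErr α (k + 2) + -cfA α (k + 1) * cfErr α (k + 1) := by
    rw [cfErr_add_two]
    ring
  have ha : (0 : ℝ) ≤ cfA α (k + 1) := by exact_mod_cast zero_le_one.trans (one_le_cfA hα k)
  rw [hk, h, one_mul, neg_mul, sub_neg_eq_add, abs_of_nonneg (by positivity), add_comm]

end Errors

section LatticeValues

variable {η₀ η₁ : ℝ} {Q₀ Q₁ s t : ℤ}

theorem le_abs_mul_sub_mul_of_mul_nonpos (h₀ : 0 ≤ η₀) (h₁ : 0 ≤ η₁) (hst : s * t ≤ 0)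
    (ht : t ≠ 0) : η₀ ≤ |s * η₁ - t * η₀| := by
  rcases ht.lt_or_gt with ht | ht
  · have hs : (0 : ℝ) ≤ s := by exact_mod_cast nonneg_of_mul_nonpos_left hst ht
    have ht : (t : ℝ) ≤ -1 := by exact_mod_cast Int.le_sub_one_of_lt ht
    calc η₀ ≤ s * η₁ - t * η₀ := by nlinarith
      _ ≤ _ := le_abs_self _
  · have hs : (s : ℝ) ≤ 0 := by exact_mod_cast nonpos_of_mul_nonpos_left hst ht
    have ht : (1 : ℝ) ≤ t := by exact_mod_cast ht
    calc η₀ ≤ -(s * η₁ - t * η₀) := by nlinarith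
      _ ≤ _ := neg_le_abs _

theorem sign_cases_of_mul_add_mul_pos (hQ₀ : 0 ≤ Q₀) (hQ₁ : 0 ≤ Q₁)
    (hq : 0 < s * Q₁ + t * Q₀) : (s * t ≤ 0 ∧ t ≠ 0) ∨ (t = 0 ∧ 0 < s) ∨ (0 < s ∧ 0 < t) := by
  rcases lt_trichotomy t 0 with ht | rfl | ht
  · have hs : 0 < s := by nlinarith
    exact Or.inl ⟨by nlinarith, ht.ne⟩
  · exact Or.inr (Or.inl ⟨rfl, pos_of_mul_pos_left (by simpa using hq) hQ₁⟩)
  · rcases le_or_gt s 0 with hs | hs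
    · exact Or.inl ⟨mul_nonpos_of_nonpos_of_nonneg hs ht.le, ht.ne'⟩
    · exact Or.inr (Or.inr ⟨hs, ht⟩)

theorem le_abs_mul_sub_mul_of_lt_add (h₀ : 0 ≤ η₀) (h₁ : 0 ≤ η₁) (hQ₀ : 0 ≤ Q₀) (hQ : Q₀ ≤ Q₁)
    (hq : 0 < s * Q₁ + t * Q₀) (hlt : s * Q₁ + t * Q₀ < Q₀ + Q₁) (hne : ¬(s = 1 ∧ t = 0)) :
    η₀ ≤ |s * η₁ - t * η₀| := by
  rcases sign_cases_of_mul_add_mul_pos hQ₀ (hQ₀.trans hQ) hq with ⟨hst, ht⟩ | ⟨rfl, hs⟩ | ⟨hs, ht⟩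
  · exact le_abs_mul_sub_mul_of_mul_nonpos h₀ h₁ hst ht
  · obtain rfl : s = 1 := by nlinarith
    exact absurd ⟨rfl, rfl⟩ hne
  · nlinarith

theorem sub_le_abs_mul_sub_mul_of_lt_two_mul (h₀ : 0 ≤ η₀) (h₁ : 0 ≤ η₁) (hQ₀ : 0 ≤ Q₀)
    (hQ₁ : 0 ≤ Q₁) (hq : 0 < s * Q₁ + t * Q₀) (hlt : s * Q₁ + t * Q₀ < 2 * Q₁)
    (hne : ¬(s = 1 ∧ t = 0)) : η₀ - η₁ ≤ |s * η₁ - t * η₀| := by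
  rcases sign_cases_of_mul_add_mul_pos hQ₀ hQ₁ hq with ⟨hst, ht⟩ | ⟨rfl, hs⟩ | ⟨hs, ht⟩
  · linarith [le_abs_mul_sub_mul_of_mul_nonpos h₀ h₁ hst ht]
  · obtain rfl : s = 1 := by nlinarith
    exact absurd ⟨rfl, rfl⟩ hne
  · obtain rfl : s = 1 := by nlinarith
    have ht : (1 : ℝ) ≤ t := by exact_mod_cast ht
    calc η₀ - η₁ ≤ -((1 : ℤ) * η₁ - t * η₀) := by push_cast; nlinarith
      _ ≤ _ := neg_le_abs _

theorem two_mul_le_abs_mul_sub_mul_of_lt {a : ℤ} (ha : 2 ≤ a) (h₁ : 0 ≤ η₁) (hη : a * η₁ ≤ η₀)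
    (hQ₀ : 0 ≤ Q₀) (hQ₁ : 0 ≤ Q₁) (hq : 0 < s * Q₁ + t * Q₀)
    (hlt : s * Q₁ + t * Q₀ < (a - 1) * Q₁ + Q₀) (hne : ¬(s = 1 ∧ t = 0)) :
    2 * η₁ ≤ |s * η₁ - t * η₀| := by
  have ha : (2 : ℝ) ≤ a := by exact_mod_cast ha
  have h₀ : 0 ≤ η₀ := by nlinarith
  rcases sign_cases_of_mul_add_mul_pos hQ₀ hQ₁ hq with ⟨hst, ht⟩ | ⟨rfl, hs⟩ | ⟨hs, ht⟩
  · nlinarith [le_abs_mul_sub_mul_of_mul_nonpos h₀ h₁ hst ht]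
  · have hs : (2 : ℝ) ≤ s := by exact_mod_cast (show 2 ≤ s by omega)
    calc 2 * η₁ ≤ s * η₁ - (0 : ℤ) * η₀ := by push_cast; nlinarith
      _ ≤ _ := le_abs_self _
  · have hsa : (s : ℝ) ≤ a - 2 := by
      have : s ≤ a - 2 := by nlinarith
      exact_mod_cast this
    have ht : (1 : ℝ) ≤ t := by exact_mod_cast ht
    calc 2 * η₁ ≤ -(s * η₁ - t * η₀) := by nlinarith
      _ ≤ _ := neg_le_abs _

end LatticeValues

section StepFunctions

open Topology

variable {β : Type*} [TopologicalSpace β] {f : ℝ → β}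

theorem continuousAt_intCast_iff_of_floor [T2Space β] (hf : ∀ t, f ⌊t⌋ = f t) (m : ℤ) :
    ContinuousAt f m ↔ f ↑(m - 1) = f m := by
  have hleft : ∀ t ∈ Ioo ((m : ℝ) - 1) m, f t = f ↑(m - 1) := fun t ht => by
    rw [← hf t, (Int.floor_eq_iff (z := m - 1)).mpr ⟨by push_cast; linarith [ht.1],
      by push_cast; linarith [ht.2]⟩]
  constructor
  · intro hc
    have h : f =ᶠ[𝓝[<] (m : ℝ)] fun _ => f ↑(m - 1) :=
      eventuallyEq_of_mem (Ioo_mem_nhdsLT (by linarith)) hleft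
    exact tendsto_nhds_unique (tendsto_const_nhds.congr' h.symm)
      (hc.tendsto.mono_left nhdsWithin_le_nhds)
  · intro h
    refine EventuallyEq.continuousAt (y := f m) (eventuallyEq_of_mem
      (Ioo_mem_nhds (by linarith : (m : ℝ) - 1 < m) (by linarith : (m : ℝ) < m + 1)) fun t ht => ?_)
    rcases lt_or_ge t m with htm | htm
    · rw [hleft t ⟨ht.1, htm⟩, h]
    · rw [← hf t, Int.floor_eq_iff.mpr ⟨htm, ht.2⟩]

theorem successiveIn_of_plateaus [T2Space β] (hf : ∀ t, f ⌊t⌋ = f t) {A B C : ℤ} {c₁ c₂ : β}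
    (hA : 0 < A) (hAB : A < B) (hBC : B < C)
    (h₁ : ∀ m : ℤ, A ≤ m → m < B → f m = c₁) (h₂ : ∀ m : ℤ, B ≤ m → m < C → f m = c₂)
    (hA₀ : f ↑(A - 1) ≠ c₁) (hc : c₁ ≠ c₂) (hC : f C ≠ c₂) :
    SuccessiveIn {m : ℤ | 0 < m ∧ ¬ContinuousAt f m} [A, B, C] := by
  have jump (m : ℤ) (hm : 0 < m) (h : f ↑(m - 1) ≠ f m) :
      m ∈ {m : ℤ | 0 < m ∧ ¬ContinuousAt f m} :=
    ⟨hm, fun hc => h ((continuousAt_intCast_iff_of_floor hf m).1 hc)⟩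
  refine ⟨?_, ?_⟩
  · simp only [List.mem_cons, List.not_mem_nil, or_false]
    rintro x (rfl | rfl | rfl)
    · exact jump x hA (by rwa [h₁ x le_rfl hAB])
    · exact jump x (by omega) (by rwa [h₁ (x - 1) (by omega) (by omega), h₂ x le_rfl hBC])
    · exact jump x (by omega) (by rw [h₂ (x - 1) (by omega) (by omega)]; exact hC.symm)
  · refine .cons_cons ⟨hAB, ?_⟩ (.cons_cons ⟨hBC, ?_⟩ (.singleton C)) <;>
      rintro z ⟨-, hz⟩ ⟨hz₁, hz₂⟩ <;> refine hz ((continuousAt_intCast_iff_of_floor hf z).2 ?_)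
    · rw [h₁ (z - 1) (by omega) (by omega), h₁ z (by omega) hz₂]
    · rw [h₂ (z - 1) (by omega) (by omega), h₂ z (by omega) hz₂]

end StepFunctions

section Psi2

variable {α : ℝ}

theorem psi2Fn_floor (t : ℝ) : psi2Fn α ⌊t⌋ = psi2Fn α t := by
  simp only [psi2Fn, Int.cast_le, Int.le_floor]

theorem psi2Fn_le {t : ℝ} {p q : ℤ} (hq : 1 ≤ q) (hqt : (q : ℝ) ≤ t)
    (hpq : ∀ n, ¬(p = cfNum α n ∧ q = cfDen α n)) : psi2Fn α t ≤ |q * α - p| :=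
  csInf_le ⟨0, by rintro x ⟨p, q, -, -, -, rfl⟩; exact abs_nonneg _⟩ ⟨p, q, hq, hqt, hpq, rfl⟩

theorem le_psi2Fn {t c : ℝ}
    (hne : ∃ p q : ℤ, 1 ≤ q ∧ (q : ℝ) ≤ t ∧ ∀ n, ¬(p = cfNum α n ∧ q = cfDen α n))
    (h : ∀ p q : ℤ, 1 ≤ q → (q : ℝ) ≤ t → (∀ n, ¬(p = cfNum α n ∧ q = cfDen α n)) →
      c ≤ |q * α - p|) : c ≤ psi2Fn α t := by
  obtain ⟨p, q, hq, hqt, hpq⟩ := hne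
  exact le_csInf ⟨_, p, q, hq, hqt, hpq, rfl⟩
    fun x ⟨p, q, hq, hqt, hpq, hx⟩ => hx ▸ h p q hq hqt hpq

end Psi2

section Plateaus

variable {α : ℝ}

theorem mul_cfErr_add_mul_cfErr (s t : ℤ) (i j : ℕ) :
    s * cfErr α i + t * cfErr α j =
      ((s * cfQ α i + t * cfQ α j : ℤ) : ℝ) * α - ((s * cfP α i + t * cfP α j : ℤ) : ℝ) := by
  simp only [cfErr]
  push_cast
  ring

theorem not_convergent_of_lt_of_lt (hα : Irrational α) {j : ℕ} {p q : ℤ} (h₁ : cfQ α j < q)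
    (h₂ : q < cfQ α (j + 1)) : ∀ n, ¬(p = cfNum α n ∧ q = cfDen α n) := by
  rintro n ⟨-, rfl⟩
  rcases le_or_gt (n + 1) j with hn | hn
  · exact (cfQ_mono hα hn).not_gt h₁
  · exact (cfQ_mono hα hn).not_gt h₂

theorem not_convergent_cfP_add_one (hα : Irrational α) (k : ℕ) :
    ∀ n, ¬(cfP α (k + 3) + 1 = cfNum α n ∧ cfQ α (k + 3) = cfDen α n) := by
  rintro n ⟨hp, hq⟩
  obtain rfl : n = k + 2 := by
    rcases lt_trichotomy (n + 1) (k + 3) with h | h | h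
    · exact absurd hq (cfQ_lt_cfQ hα h le_add_self).ne'
    · omega
    · exact absurd hq (cfQ_lt_cfQ hα h (by omega)).ne
  exact absurd hp (lt_add_one _).ne'

theorem psi2Fn_le_of_lt_of_lt (hα : Irrational α) {j : ℕ} {p q : ℤ} {t : ℝ}
    (h₁ : cfQ α j < q) (h₂ : q < cfQ α (j + 1)) (hqt : (q : ℝ) ≤ t) :
    psi2Fn α t ≤ |q * α - p| :=
  psi2Fn_le (by linarith [cfQ_nonneg hα j]) hqt (not_convergent_of_lt_of_lt hα h₁ h₂)

/-- With `n = k + 3`, `(s, t)` are the coordinates of `(p, q)` in the basis `(p_{n-1}, q_{n-1})`,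
`(p_{n-2}, q_{n-2})` of `ℤ²`. The non-convergent `(p_{n-1} + 1, q_{n-1})` is why `q_{n-1} ≤ m`
is assumed: it keeps the infimum defining `ψ_α^[2](m)` from being `sInf ∅ = 0`. -/
theorem le_psi2Fn_of_coords (hα : Irrational α) (k : ℕ) {m : ℤ} {c : ℝ} (hm : cfQ α (k + 3) ≤ m)
    (h : ∀ s t : ℤ, 0 < s * cfQ α (k + 3) + t * cfQ α (k + 2) →
      s * cfQ α (k + 3) + t * cfQ α (k + 2) ≤ m → ¬(s = 1 ∧ t = 0) →
      c ≤ abs (s * |cfErr α (k + 3)| - t * |cfErr α (k + 2)|)) :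
    c ≤ psi2Fn α m := by
  refine le_psi2Fn ⟨_, _, one_le_cfQ hα _, by exact_mod_cast hm, not_convergent_cfP_add_one hα k⟩
    fun p q hq hqm hpq => ?_
  obtain ⟨s, t, rfl, rfl⟩ := exists_eq_cfP_cfQ_comb (α := α) (k + 2) p q
  rw [← mul_cfErr_add_mul_cfErr, abs_mul_cfErr_add_mul_cfErr hα]
  refine h s t (one_pos.trans_le hq) (by exact_mod_cast hqm) ?_
  rintro ⟨rfl, rfl⟩
  exact hpq (k + 2) ⟨by simp [cfNum], by simp [cfDen]⟩

theorem le_psi2Fn_of_lt_add (hα : Irrational α) (k : ℕ) {m : ℤ} (hm : cfQ α (k + 3) ≤ m)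
    (hlt : m < cfQ α (k + 2) + cfQ α (k + 3)) : |cfErr α (k + 2)| ≤ psi2Fn α m :=
  le_psi2Fn_of_coords hα k hm fun _ _ hq hqm hne =>
    le_abs_mul_sub_mul_of_lt_add (abs_nonneg _) (abs_nonneg _) (cfQ_nonneg hα _)
      (cfQ_lt_succ hα k).le hq (hqm.trans_lt hlt) hne

theorem le_psi2Fn_of_lt_two_mul (hα : Irrational α) (k : ℕ) {m : ℤ} (hm : cfQ α (k + 3) ≤ m)
    (hlt : m < 2 * cfQ α (k + 3)) : |cfErr α (k + 2)| - |cfErr α (k + 3)| ≤ psi2Fn α m :=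
  le_psi2Fn_of_coords hα k hm fun _ _ hq hqm hne =>
    sub_le_abs_mul_sub_mul_of_lt_two_mul (abs_nonneg _) (abs_nonneg _) (cfQ_nonneg hα _)
      (cfQ_nonneg hα _) hq (hqm.trans_lt hlt) hne

theorem le_psi2Fn_of_lt_sub (hα : Irrational α) (k : ℕ) (ha : 2 ≤ cfA α (k + 3)) {m : ℤ}
    (hm : cfQ α (k + 3) ≤ m) (hlt : m < cfQ α (k + 4) - cfQ α (k + 3)) :
    2 * |cfErr α (k + 3)| ≤ psi2Fn α m := by
  have hη : cfA α (k + 3) * |cfErr α (k + 3)| ≤ |cfErr α (k + 2)| := by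
    rw [abs_cfErr_eq_cfA_mul_add hα (k + 2)]
    exact le_add_of_nonneg_right (abs_nonneg _)
  have hQ : cfQ α (k + 4) = cfA α (k + 3) * cfQ α (k + 3) + cfQ α (k + 2) := rfl
  exact le_psi2Fn_of_coords hα k hm fun _ _ hq hqm hne =>
    two_mul_le_abs_mul_sub_mul_of_lt ha (abs_nonneg _) hη (cfQ_nonneg hα _) (cfQ_nonneg hα _) hq
      (by linarith) hne

theorem psi2Fn_le_of_add_le (hα : Irrational α) (k : ℕ) (ha : 2 ≤ cfA α (k + 3)) {m : ℤ}
    (hm : cfQ α (k + 2) + cfQ α (k + 3) ≤ m) :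
    psi2Fn α m ≤ |cfErr α (k + 2)| - |cfErr α (k + 3)| := by
  have hQ₀ : 1 ≤ cfQ α (k + 2) := one_le_cfQ hα (k + 1)
  have hQ₁ : 1 ≤ cfQ α (k + 3) := one_le_cfQ hα (k + 2)
  have hQ : cfQ α (k + 4) = cfA α (k + 3) * cfQ α (k + 3) + cfQ α (k + 2) := rfl
  have h := psi2Fn_le_of_lt_of_lt hα (j := k + 3) (p := 1 * cfP α (k + 3) + 1 * cfP α (k + 2))
    (q := 1 * cfQ α (k + 3) + 1 * cfQ α (k + 2)) (t := m) (by linarith)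
    (by nlinarith) (Int.cast_le.mpr (by linarith))
  rwa [← mul_cfErr_add_mul_cfErr, abs_mul_cfErr_add_mul_cfErr hα, Int.cast_one, one_mul, one_mul,
    abs_sub_comm, abs_of_pos (sub_pos.2 (abs_cfErr_succ_lt hα _))] at h

theorem psi2Fn_le_of_two_mul_le (hα : Irrational α) (k : ℕ) (ha : 2 ≤ cfA α (k + 3)) {m : ℤ}
    (hm : 2 * cfQ α (k + 3) ≤ m) : psi2Fn α m ≤ 2 * |cfErr α (k + 3)| := by
  have hQ₀ : 1 ≤ cfQ α (k + 2) := one_le_cfQ hα (k + 1)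
  have hQ₁ : 1 ≤ cfQ α (k + 3) := one_le_cfQ hα (k + 2)
  have hQ : cfQ α (k + 4) = cfA α (k + 3) * cfQ α (k + 3) + cfQ α (k + 2) := rfl
  have h := psi2Fn_le_of_lt_of_lt hα (j := k + 3) (p := 2 * cfP α (k + 3) + 0 * cfP α (k + 2))
    (q := 2 * cfQ α (k + 3) + 0 * cfQ α (k + 2)) (t := m) (by linarith)
    (by nlinarith) (Int.cast_le.mpr (by linarith))
  rwa [← mul_cfErr_add_mul_cfErr, abs_mul_cfErr_add_mul_cfErr hα, Int.cast_zero, zero_mul,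
    sub_zero, Int.cast_ofNat, abs_of_nonneg (by positivity)] at h

theorem psi2Fn_le_of_sub_le (hα : Irrational α) (k : ℕ) (ha : 2 ≤ cfA α (k + 3)) {m : ℤ}
    (hm : cfQ α (k + 4) - cfQ α (k + 3) ≤ m) :
    psi2Fn α m ≤ |cfErr α (k + 3)| + |cfErr α (k + 4)| := by
  have hQ₀ : 1 ≤ cfQ α (k + 2) := one_le_cfQ hα (k + 1)
  have hQ₁ : 1 ≤ cfQ α (k + 3) := one_le_cfQ hα (k + 2)
  have hQ : cfQ α (k + 4) = cfA α (k + 3) * cfQ α (k + 3) + cfQ α (k + 2) := rfl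
  have h := psi2Fn_le_of_lt_of_lt hα (j := k + 3) (p := 1 * cfP α (k + 4) + (-1) * cfP α (k + 3))
    (q := 1 * cfQ α (k + 4) + (-1) * cfQ α (k + 3)) (t := m)
    (by nlinarith) (by linarith) (Int.cast_le.mpr (by linarith))
  rwa [← mul_cfErr_add_mul_cfErr, abs_mul_cfErr_add_mul_cfErr hα, Int.cast_one, one_mul,
    Int.cast_neg, Int.cast_one, neg_one_mul, sub_neg_eq_add, abs_of_nonneg (by positivity),
    add_comm] at h

end Plateaus

theorem stmt11_general (α : ℝ) (hα : Irrational α)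
    (n : ℕ) (hn : 3 ≤ n) (ha : 3 ≤ cfA α n) :
    SuccessiveIn (QSet α)
      [cfDen α (n - 2) + cfDen α (n - 1), 2 * cfDen α (n - 1),
        cfDen α n - cfDen α (n - 1)] ∧
    cfXi α (n - 2) - cfXi α (n - 1) > 2 * cfXi α (n - 1) ∧
    2 * cfXi α (n - 1) > cfXi α (n - 1) + cfXi α n := by
  obtain ⟨k, rfl⟩ : ∃ k, n = k + 3 := ⟨n - 3, by omega⟩
  show SuccessiveIn (QSet α)
      [cfQ α (k + 2) + cfQ α (k + 3), 2 * cfQ α (k + 3), cfQ α (k + 4) - cfQ α (k + 3)] ∧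
    |cfErr α (k + 2)| - |cfErr α (k + 3)| > 2 * |cfErr α (k + 3)| ∧
    2 * |cfErr α (k + 3)| > |cfErr α (k + 3)| + |cfErr α (k + 4)|
  have ha₂ : 2 ≤ cfA α (k + 3) := by omega
  have hQ₀ : 1 ≤ cfQ α (k + 2) := one_le_cfQ hα (k + 1)
  have hQ₀₁ : cfQ α (k + 2) < cfQ α (k + 3) := cfQ_lt_succ hα k
  have hQ : cfQ α (k + 4) = cfA α (k + 3) * cfQ α (k + 3) + cfQ α (k + 2) := rfl
  have hξ := abs_cfErr_eq_cfA_mul_add hα (k + 2)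
  have hξ₂ : 0 < |cfErr α (k + 4)| := abs_pos.mpr (cfErr_ne_zero hα _)
  have hξ₁₂ : |cfErr α (k + 4)| < |cfErr α (k + 3)| := abs_cfErr_succ_lt hα _
  have hgap : |cfErr α (k + 2)| - |cfErr α (k + 3)| > 2 * |cfErr α (k + 3)| := by
    have : (3 : ℝ) ≤ cfA α (k + 3) := by exact_mod_cast ha
    nlinarith
  refine ⟨successiveIn_of_plateaus psi2Fn_floor (by omega) (by omega) (by nlinarith)
    (fun m hm hm' => le_antisymm (psi2Fn_le_of_add_le hα k ha₂ hm)
      (le_psi2Fn_of_lt_two_mul hα k (by omega) hm'))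
    (fun m hm hm' => le_antisymm (psi2Fn_le_of_two_mul_le hα k ha₂ hm)
      (le_psi2Fn_of_lt_sub hα k ha₂ (by omega) hm')) ?_ hgap.ne' ?_, hgap, by linarith⟩
  · exact ((le_psi2Fn_of_lt_add hα k (by omega) (by omega)).trans_lt' (by linarith)).ne'
  · exact ((psi2Fn_le_of_sub_le hα k ha₂ le_rfl).trans_lt (by linarith)).ne

/-- Let `α ∈ (0,1)` be irrational, `n ≥ 3` and `aₙ ≥ 3`. Then
`q_{n-2}+q_{n-1}`, `2q_{n-1}`, `qₙ − q_{n-1}` are three successive elements of `𝔔(α)`,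
and `ξ_{n-2} − ξ_{n-1} > 2ξ_{n-1} > ξ_{n-1} + ξₙ`. -/
theorem stmt11 (α : ℝ) (hα : Irrational α) (h0 : 0 < α) (h1 : α < 1)
    (n : ℕ) (hn : 3 ≤ n) (ha : 3 ≤ cfA α n) :
    SuccessiveIn (QSet α)
      [cfDen α (n - 2) + cfDen α (n - 1), 2 * cfDen α (n - 1),
        cfDen α n - cfDen α (n - 1)] ∧
    cfXi α (n - 2) - cfXi α (n - 1) > 2 * cfXi α (n - 1) ∧
    2 * cfXi α (n - 1) > cfXi α (n - 1) + cfXi α n :=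
  stmt11_general α hα n hn ha
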